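/- arXiv:1007.4821 — 7 statements merged into one kernel-verified Lean document; each statement's English description precedes it below -/
import Mathlib

section
/- For every τ in the complex upper half-plane and every z ∈ ℂ, the Mordell integral satisfies the modular inversion relation h(τ,z) = (e^{πiz²/τ}/√(−iτ)) · h(−1/τ, z/τ); equivalently, −(e^{πiz²/τ}/√(−iτ))·h(−1/τ, z/τ) + h(τ,z) = 0. -/
/-!
The function `x ↦ 1 / cosh (π x)` is its own Fourier transform: the logistic substitution
`t = 1 / (1 + e^{-2πx})` turns its Fourier integral at `ξ` into `B(1/2 - iξ, 1/2 + iξ) / π`,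
which equals `1 / cosh (π ξ)` by the reflection formula for `Γ`. The Fourier transform of the
Gaussian `e^{πiτx² − 2πzx}` is `e^{πiz²/τ} / √(−iτ)` times the Gaussian with parameters
`(−1/τ, z/τ)`, so the relation is `∫ f̂ g = ∫ f ĝ` with `g = 1 / cosh (π x)`.
-/

open Complex MeasureTheory

/-- The Mordell integral `h(τ,z) = ∫_ℝ e^{πiτx² − 2πzx}/cosh(πx) dx`. -/
noncomputable def mordellH (τ z : ℂ) : ℂ :=
  ∫ x : ℝ, Complex.exp ((Real.pi : ℂ) * I * τ * (x : ℂ) ^ 2 - 2 * (Real.pi : ℂ) * z * (x : ℂ)) /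
    Complex.cosh ((Real.pi : ℂ) * (x : ℂ))

open scoped Real FourierTransform

theorem Real.integral_fourier_mul_eq {V : Type*} [NormedAddCommGroup V] [InnerProductSpace ℝ V]
    [MeasurableSpace V] [BorelSpace V] [FiniteDimensional ℝ V] {f g : V → ℂ}
    (hf : Integrable f) (hg : Integrable g) :
    ∫ ξ, 𝓕 f ξ * g ξ = ∫ x, f x * 𝓕 g x := by
  have h := VectorFourier.integral_fourierIntegral_smul_eq_flip (L := innerₗ V)
    Real.continuous_fourierChar continuous_inner hf hg
  rwa [flip_innerₗ] at h

theorem Real.sigmoid_eq_exp_div_two_mul_cosh (y : ℝ) :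
    Real.sigmoid y = Real.exp (y / 2) / (2 * Real.cosh (y / 2)) := by
  rw [Real.sigmoid_def, Real.cosh_eq, mul_div_cancel₀ _ two_ne_zero, inv_eq_one_div,
    div_eq_div_iff (by positivity) (by positivity), one_mul, mul_add, ← Real.exp_add,
    mul_one, show y / 2 + -y = -(y / 2) by ring]

theorem Complex.ofReal_cpow_eq_exp_log {t : ℝ} (ht : 0 < t) (s : ℂ) :
    (t : ℂ) ^ s = cexp (Real.log t * s) := by
  rw [cpow_def_of_ne_zero (ofReal_ne_zero.2 ht.ne'), ofReal_log ht.le]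

theorem Complex.sigmoid_cpow_mul_sigmoid_neg_cpow {u v : ℂ} (huv : u + v = 1) (y : ℝ) :
    (Real.sigmoid y : ℂ) ^ u * (Real.sigmoid (-y) : ℂ) ^ v =
      cexp ((u - v) * y / 2) / (2 * Complex.cosh (y / 2)) := by
  have hσ := Real.sigmoid_pos y
  have hlog_neg : Real.log (Real.sigmoid (-y)) = Real.log (Real.sigmoid y) - y := by
    rw [← Real.sigmoid_mul_rexp_neg, Real.log_mul hσ.ne' (Real.exp_pos _).ne', Real.log_exp,
      sub_eq_add_neg]
  have hσ_eq : (Real.sigmoid y : ℂ) = cexp (y / 2) / (2 * Complex.cosh (y / 2)) := by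
    rw [Real.sigmoid_eq_exp_div_two_mul_cosh]
    push_cast
    rfl
  calc (Real.sigmoid y : ℂ) ^ u * (Real.sigmoid (-y) : ℂ) ^ v
      = cexp (Real.log (Real.sigmoid y)) * cexp (-(v * y)) := by
        rw [ofReal_cpow_eq_exp_log hσ, ofReal_cpow_eq_exp_log (Real.sigmoid_pos _), hlog_neg,
          ← Complex.exp_add, ← Complex.exp_add]
        congr 1
        push_cast
        linear_combination (Real.log (Real.sigmoid y) : ℂ) * huv
    _ = cexp ((u - v) * y / 2) / (2 * Complex.cosh (y / 2)) := by
        rw [ofReal_log hσ.le, Complex.exp_log (by exact_mod_cast hσ.ne'), hσ_eq,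
          div_mul_eq_mul_div, ← Complex.exp_add]
        congr 2
        linear_combination -(y / 2 : ℂ) * huv

theorem Complex.betaIntegral_eq_integral_sigmoid (u v : ℂ) :
    betaIntegral u v = ∫ y : ℝ, (Real.sigmoid y : ℂ) ^ u * (Real.sigmoid (-y) : ℂ) ^ v := by
  have hchange := integral_image_eq_integral_abs_deriv_smul MeasurableSet.univ
    (fun y _ => (Real.hasDerivAt_sigmoid y).hasDerivWithinAt) Real.sigmoid_injective.injOn
    (fun t : ℝ => (t : ℂ) ^ (u - 1) * (1 - (t : ℂ)) ^ (v - 1))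
  rw [Set.image_univ, Real.range_sigmoid, setIntegral_univ] at hchange
  rw [betaIntegral, intervalIntegral.integral_of_le zero_le_one, integral_Ioc_eq_integral_Ioo,
    hchange]
  congr 1 with y
  have h0 : (Real.sigmoid y : ℂ) ≠ 0 := by exact_mod_cast (Real.sigmoid_pos y).ne'
  have h1 : (Real.sigmoid (-y) : ℂ) ≠ 0 := by exact_mod_cast (Real.sigmoid_pos (-y)).ne'
  have hneg : (1 : ℂ) - Real.sigmoid y = Real.sigmoid (-y) := by
    rw [Real.sigmoid_neg]
    push_cast
    ring
  rw [← Real.sigmoid_neg, abs_of_pos (mul_pos (Real.sigmoid_pos y) (Real.sigmoid_pos (-y))),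
    Complex.real_smul, hneg, cpow_sub _ _ h0, cpow_sub _ _ h1, cpow_one, cpow_one]
  push_cast
  field_simp

theorem Complex.betaIntegral_one_sub {u : ℂ} (hu0 : 0 < u.re) (hu1 : u.re < 1) :
    betaIntegral u (1 - u) = π / Complex.sin (π * u) := by
  have h := Gamma_mul_Gamma_eq_betaIntegral hu0 (by simpa using hu1 : 0 < (1 - u).re)
  rw [add_sub_cancel, Gamma_one, one_mul] at h
  rw [← h, Gamma_mul_Gamma_one_sub]

theorem fourier_inv_cosh_pi_mul :
    (𝓕 fun x : ℝ => (Complex.cosh (π * x))⁻¹) = fun ξ : ℝ => (Complex.cosh (π * ξ))⁻¹ := by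
  ext ξ
  set u : ℂ := 1 / 2 - I * ξ
  set G : ℝ → ℂ := fun y => cexp ((u - (1 - u)) * y / 2) / (2 * Complex.cosh (y / 2))
  have hsin : Complex.sin (π * u) = Complex.cosh (π * ξ) := by
    rw [show (π : ℂ) * u = π / 2 - π * ξ * I by ring, sin_pi_div_two_sub, cos_mul_I]
  have hG_integral : ∫ y, G y = π / Complex.cosh (π * ξ) := by
    rw [← hsin, ← betaIntegral_one_sub (by simp [u]) (by norm_num [u]),
      betaIntegral_eq_integral_sigmoid]
    simp_rw [sigmoid_cpow_mul_sigmoid_neg_cpow (add_sub_cancel u 1), G]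
  have hG (x : ℝ) :
      G (2 * π * x) = cexp (↑(-2 * π * x * ξ) * I) / (2 * Complex.cosh (π * x)) := by
    simp only [G, u]
    push_cast
    ring_nf
  calc 𝓕 (fun x : ℝ => (Complex.cosh (π * x))⁻¹) ξ
      = (π : ℂ)⁻¹ * (2 * π * ∫ x : ℝ, G (2 * π * x)) := by
        rw [Real.fourier_real_eq_integral_exp_smul, ← integral_const_mul, ← integral_const_mul]
        congr 1 with x
        rw [hG, smul_eq_mul]
        field_simp
    _ = (π : ℂ)⁻¹ * ∫ y, G y := by
        rw [Measure.integral_comp_mul_left, abs_of_pos (by positivity), Complex.real_smul]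
        push_cast
        field_simp
    _ = (Complex.cosh (π * ξ))⁻¹ := by
        rw [hG_integral]
        field_simp

theorem Real.one_add_sq_div_four_le_cosh (y : ℝ) : 1 + y ^ 2 / 4 ≤ Real.cosh y := by
  rw [← Real.cosh_abs, Real.cosh_eq]
  have hpos := Real.quadratic_le_exp_of_nonneg (abs_nonneg y)
  have hneg := Real.add_one_le_exp (-|y|)
  rw [sq_abs] at hpos
  linarith

theorem integrable_inv_cosh_pi_mul : Integrable fun x : ℝ => (Complex.cosh (π * x))⁻¹ := by
  have hreal : Integrable fun x : ℝ => (Real.cosh (π * x))⁻¹ := by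
    refine integrable_inv_one_add_sq.mono' ?_ (ae_of_all _ fun x => ?_)
    · exact ((Real.continuous_cosh.comp (continuous_const_mul π)).inv₀
        fun x => (Real.cosh_pos _).ne').aestronglyMeasurable
    · rw [Real.norm_of_nonneg (inv_nonneg.2 (Real.cosh_pos _).le)]
      refine inv_anti₀ (by positivity) ((?_ : 1 + x ^ 2 ≤ 1 + (π * x) ^ 2 / 4).trans
        (Real.one_add_sq_div_four_le_cosh _))
      have hπ : 4 ≤ π ^ 2 := by nlinarith [Real.pi_gt_three]
      rw [mul_pow]
      nlinarith [mul_le_mul_of_nonneg_right hπ (sq_nonneg x)]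
  convert hreal.ofReal (𝕜 := ℂ) using 2 with x
  simp [Complex.ofReal_cosh]

theorem integral_cexp_quadratic_mul_of_fourier_eq_self {g : ℝ → ℂ} (hg : Integrable g)
    (hFg : 𝓕 g = g) {τ : ℂ} (hτ : 0 < τ.im) (z : ℂ) :
    ∫ x : ℝ, cexp (π * I * τ * x ^ 2 - 2 * π * z * x) * g x =
      cexp (π * I * z ^ 2 / τ) / (-I * τ) ^ (1 / 2 : ℂ) *
        ∫ x : ℝ, cexp (π * I * (-1 / τ) * x ^ 2 - 2 * π * (z / τ) * x) * g x := by
  have hb : 0 < (-I * τ).re := by simpa using hτ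
  set f : ℝ → ℂ := fun x => cexp (-π * (-I * τ) * x ^ 2 + 2 * π * (-z) * x)
  have hf : Integrable f := by
    simpa [f] using integrable_cexp_quadratic (b := π * (-I * τ))
      (by simpa using mul_pos Real.pi_pos hτ) (2 * π * (-z)) 0
  have hexp (ξ : ℝ) : -π / (-I * τ) * (ξ + I * -z) ^ 2 =
      π * I * z ^ 2 / τ + (π * I * (-1 / τ) * ξ ^ 2 - 2 * π * (z / τ) * ξ) := by
    field_simp
    ring_nf
    simp only [I_sq]
    ring
  calc ∫ x : ℝ, cexp (π * I * τ * x ^ 2 - 2 * π * z * x) * g x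
      = ∫ x, f x * 𝓕 g x := by
        rw [hFg]
        congr with x
        simp only [f]
        congr 2
        ring
    _ = ∫ ξ, 𝓕 f ξ * g ξ := (Real.integral_fourier_mul_eq hf hg).symm
    _ = ∫ ξ : ℝ, cexp (π * I * z ^ 2 / τ) / (-I * τ) ^ (1 / 2 : ℂ) *
          (cexp (π * I * (-1 / τ) * ξ ^ 2 - 2 * π * (z / τ) * ξ) * g ξ) := by
        congr with ξ
        rw [congr_fun (fourier_gaussian_pi' hb (-z)) ξ, hexp, Complex.exp_add]
        ring
    _ = _ := integral_const_mul _ _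

/-- Modular inversion relation for the Mordell integral:
`−(e^{πiz²/τ}/√(−iτ))·h(−1/τ, z/τ) + h(τ,z) = 0`. -/
theorem mordell_inversion (τ z : ℂ) (hτ : 0 < τ.im) :
    -(Complex.exp ((Real.pi : ℂ) * I * z ^ 2 / τ) / (-I * τ) ^ ((1 : ℂ) / 2)) *
        mordellH (-1 / τ) (z / τ) + mordellH τ z = 0 := by
  have h := integral_cexp_quadratic_mul_of_fourier_eq_self integrable_inv_cosh_pi_mul
    fourier_inv_cosh_pi_mul hτ z
  simp only [← div_eq_mul_inv] at h
  rw [mordellH, mordellH, h]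
  ring
end

section
/- For every τ in the complex upper half-plane and every z ∈ ℂ, the Mordell integral satisfies h(τ,z) + h(τ, z+1) = (2/√(−iτ)) · e^{πi(z+1/2)²/τ}. -/
/-! Since `e^{-2πzx} + e^{-2π(z+1)x} = 2 cosh(πx) e^{-2π(z+1/2)x}`, the denominators cancel in
`h(τ,z) + h(τ,z+1)`, leaving twice the Gaussian integral `∫ e^{πiτx² − 2π(z+1/2)x} dx`, which is
evaluated by completing the square. -/

open Complex MeasureTheory

open scoped Real

noncomputable def mordellIntegrand (τ z : ℂ) (x : ℝ) : ℂ :=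
  cexp (π * I * τ * x ^ 2 - 2 * π * z * x) / Complex.cosh (π * x)

lemma mordellH_eq_integral (τ z : ℂ) : mordellH τ z = ∫ x, mordellIntegrand τ z x := rfl

lemma cosh_ofReal_ne_zero (x : ℝ) : Complex.cosh x ≠ 0 := by
  rw [← ofReal_cosh]
  exact_mod_cast (Real.cosh_pos x).ne'

lemma norm_inv_cosh_ofReal_le_one (x : ℝ) : ‖(Complex.cosh x)⁻¹‖ ≤ 1 := by
  rw [← ofReal_cosh, ← ofReal_inv, norm_real, Real.norm_eq_abs,
    abs_of_pos (inv_pos.mpr (Real.cosh_pos x))]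
  exact inv_le_one_of_one_le₀ (Real.one_le_cosh x)

lemma re_pi_mul_I_mul_lt_zero {τ : ℂ} (hτ : 0 < τ.im) : (π * I * τ).re < 0 := by
  simpa [mul_re] using mul_pos Real.pi_pos hτ

lemma integrable_mordellIntegrand {τ : ℂ} (hτ : 0 < τ.im) (z : ℂ) :
    Integrable (mordellIntegrand τ z) := by
  have hgauss : Integrable fun x : ℝ => cexp (π * I * τ * x ^ 2 + (-2 * π * z) * x + 0) :=
    integrable_cexp_quadratic' (re_pi_mul_I_mul_lt_zero hτ) _ _
  have hcosh (x : ℝ) : Complex.cosh (π * x) = Complex.cosh (π * x : ℝ) := by push_cast; rfl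
  refine (hgauss.bdd_mul (c := 1)
    (f := fun x : ℝ => (Complex.cosh (π * x))⁻¹) ?_ ?_).congr ?_
  · refine (Continuous.inv₀ (by fun_prop) fun x => ?_).aestronglyMeasurable
    rw [hcosh]
    exact cosh_ofReal_ne_zero _
  · exact .of_forall fun x => by simpa only [hcosh] using norm_inv_cosh_ofReal_le_one _
  · refine .of_forall fun x => ?_
    simp only [mordellIntegrand, div_eq_inv_mul]
    ring_nf

lemma mordellIntegrand_add_shift_one (τ z : ℂ) (x : ℝ) :
    mordellIntegrand τ z x + mordellIntegrand τ (z + 1) x =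
      2 * cexp (π * I * τ * x ^ 2 - 2 * π * (z + 1 / 2) * x) := by
  set g := cexp (π * I * τ * x ^ 2 - 2 * π * (z + 1 / 2) * x)
  have hz : cexp (π * I * τ * x ^ 2 - 2 * π * z * x) = g * cexp (π * x) := by
    rw [← Complex.exp_add]; ring_nf
  have hz1 : cexp (π * I * τ * x ^ 2 - 2 * π * (z + 1) * x) = g * cexp (-(π * x)) := by
    rw [← Complex.exp_add]; ring_nf
  have hcosh : Complex.cosh (π * x) ≠ 0 := by
    simpa only [ofReal_mul] using cosh_ofReal_ne_zero (π * x)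
  rw [mordellIntegrand, mordellIntegrand, ← add_div, hz, hz1, ← mul_add, div_eq_iff hcosh,
    Complex.cosh]
  ring

lemma integral_cexp_pi_mul_I_mul_sq_sub {τ : ℂ} (hτ : 0 < τ.im) (w : ℂ) :
    ∫ x : ℝ, cexp (π * I * τ * x ^ 2 - 2 * π * w * x) =
      1 / (-I * τ) ^ (1 / 2 : ℂ) * cexp (π * I * w ^ 2 / τ) := by
  have hτ0 : τ ≠ 0 := by rintro rfl; simp at hτ
  have hπ : (π : ℂ) ≠ 0 := ofReal_ne_zero.mpr Real.pi_ne_zero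
  have harg : (-I * τ).arg ≠ π := by
    rw [Ne, arg_eq_pi_iff, not_and_or, not_lt]
    left
    simpa using hτ.le
  have hquad := integral_cexp_quadratic (re_pi_mul_I_mul_lt_zero hτ) (-2 * π * w) 0
  have hbase : (π : ℂ) / -(π * I * τ) = (-I * τ)⁻¹ := by field_simp
  have hexp : 0 - (-2 * π * w) ^ 2 / (4 * (π * I * τ)) = π * I * w ^ 2 / τ := by
    field_simp
    ring_nf
    simp only [I_sq]
    ring
  rw [hbase, inv_cpow _ _ harg, hexp, ← one_div] at hquad
  simpa only [add_zero, neg_mul, sub_eq_add_neg] using hquad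

/-- `h(τ,z) + h(τ, z+1) = (2/√(−iτ)) · e^{πi(z+1/2)²/τ}`. -/
theorem mordell_shift_one (τ z : ℂ) (hτ : 0 < τ.im) :
    mordellH τ z + mordellH τ (z + 1) =
      2 / (-I * τ) ^ ((1 : ℂ) / 2) *
        Complex.exp ((Real.pi : ℂ) * I * (z + 1 / 2) ^ 2 / τ) := by
  rw [mordellH_eq_integral, mordellH_eq_integral,
    ← integral_add (integrable_mordellIntegrand hτ z) (integrable_mordellIntegrand hτ (z + 1))]
  simp_rw [mordellIntegrand_add_shift_one]
  rw [integral_const_mul, integral_cexp_pi_mul_I_mul_sq_sub hτ]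
  ring
end

section
/- The Jacobi group Γ^J is generated by the two elements G₁ = [S,(1,0)] and G₂ = [T,(1,0)]; that is, the subgroup of Γ^J generated by {G₁, G₂} is all of Γ^J. -/
/-- The Jacobi group: pairs `[M,(λ,μ)]` with `M ∈ SL(2,ℤ)` and `(λ,μ) ∈ ℤ²`. -/
@[ext]
structure JacobiGroup where
  M : Matrix.SpecialLinearGroup (Fin 2) ℤ
  v : ℤ × ℤ

namespace JacobiGroup

/-- The right action of `M ∈ SL(2,ℤ)` on a row vector `(λ,μ)`. -/
def rowAct (v : ℤ × ℤ) (M : Matrix.SpecialLinearGroup (Fin 2) ℤ) : ℤ × ℤ :=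
  (v.1 * M.1 0 0 + v.2 * M.1 1 0, v.1 * M.1 0 1 + v.2 * M.1 1 1)

lemma rowAct_one (v : ℤ × ℤ) : rowAct v 1 = v := by
  simp [rowAct, Matrix.SpecialLinearGroup.coe_one, Matrix.one_apply]

lemma rowAct_zero (M : Matrix.SpecialLinearGroup (Fin 2) ℤ) : rowAct 0 M = 0 := by
  simp [rowAct]

lemma rowAct_rowAct (v : ℤ × ℤ) (M N : Matrix.SpecialLinearGroup (Fin 2) ℤ) :
    rowAct (rowAct v M) N = rowAct v (M * N) := by
  simp only [rowAct, Matrix.SpecialLinearGroup.coe_mul, Matrix.mul_apply, Fin.sum_univ_two]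
  exact Prod.ext (by ring) (by ring)

lemma rowAct_add (v w : ℤ × ℤ) (M : Matrix.SpecialLinearGroup (Fin 2) ℤ) :
    rowAct (v + w) M = rowAct v M + rowAct w M := by
  simp only [rowAct, Prod.fst_add, Prod.snd_add, Prod.mk_add_mk]
  exact Prod.ext (by ring) (by ring)

lemma rowAct_neg (v : ℤ × ℤ) (M : Matrix.SpecialLinearGroup (Fin 2) ℤ) :
    rowAct (-v) M = -(rowAct v M) := by
  simp only [rowAct, Prod.fst_neg, Prod.snd_neg, Prod.neg_mk]
  exact Prod.ext (by ring) (by ring)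

instance : Mul JacobiGroup :=
  ⟨fun g h => ⟨g.M * h.M, rowAct g.v h.M + h.v⟩⟩

instance : One JacobiGroup := ⟨⟨1, 0⟩⟩

instance : Inv JacobiGroup := ⟨fun g => ⟨g.M⁻¹, -(rowAct g.v g.M⁻¹)⟩⟩

lemma mul_def (g h : JacobiGroup) : g * h = ⟨g.M * h.M, rowAct g.v h.M + h.v⟩ := rfl

lemma one_def : (1 : JacobiGroup) = ⟨1, 0⟩ := rfl

lemma inv_def (g : JacobiGroup) : g⁻¹ = ⟨g.M⁻¹, -(rowAct g.v g.M⁻¹)⟩ := rfl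

/-- The Jacobi group law `[M₁,(λ₁,μ₁)]·[M₂,(λ₂,μ₂)] = [M₁M₂, (λ₁,μ₁)M₂ + (λ₂,μ₂)]`
makes `JacobiGroup` a group. -/
instance : Group JacobiGroup where
  mul_assoc a b c := by
    ext1
    · show a.M * b.M * c.M = a.M * (b.M * c.M)
      exact mul_assoc _ _ _
    · show rowAct (rowAct a.v b.M + b.v) c.M + c.v =
        rowAct a.v (b.M * c.M) + (rowAct b.v c.M + c.v)
      rw [rowAct_add, rowAct_rowAct, add_assoc]
  one_mul a := by
    ext1
    · show (1 : Matrix.SpecialLinearGroup (Fin 2) ℤ) * a.M = a.M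
      exact one_mul _
    · show rowAct 0 a.M + a.v = a.v
      rw [rowAct_zero, zero_add]
  mul_one a := by
    ext1
    · show a.M * 1 = a.M
      exact mul_one _
    · show rowAct a.v 1 + 0 = a.v
      rw [rowAct_one, add_zero]
  inv_mul_cancel a := by
    ext1
    · show a.M⁻¹ * a.M = 1
      exact inv_mul_cancel _
    · show rowAct (-(rowAct a.v a.M⁻¹)) a.M + a.v = 0
      rw [rowAct_neg, rowAct_rowAct, inv_mul_cancel, rowAct_one, neg_add_cancel]

end JacobiGroup

/-- The matrix `S = [[1,1],[0,1]]` in `SL(2,ℤ)`. -/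
def matS : Matrix.SpecialLinearGroup (Fin 2) ℤ :=
  ⟨!![1, 1; 0, 1], by norm_num [Matrix.det_fin_two_of]⟩

/-- The matrix `T = [[0,−1],[1,0]]` in `SL(2,ℤ)`. -/
def matT : Matrix.SpecialLinearGroup (Fin 2) ℤ :=
  ⟨!![0, -1; 1, 0], by norm_num [Matrix.det_fin_two_of]⟩

/-- `G₀ = [S,(0,0)]`. -/
def G0 : JacobiGroup := ⟨matS, (0, 0)⟩

/-- `G₁ = [S,(1,0)]`. -/
def G1 : JacobiGroup := ⟨matS, (1, 0)⟩

/-- `G₂ = [T,(1,0)]`. -/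
def G2 : JacobiGroup := ⟨matT, (1, 0)⟩


/-!
`Γ^J` is the semidirect product of `SL(2,ℤ) = ⟨S, T⟩`, embedded as the elements `[M,0]`, with the
translations `[1,v]`, on which `[M,0]` acts by conjugation as `v ↦ vM`. Once the translation
`[1,(1,0)]` lies in `⟨G₁, G₂⟩`, so do `[S,0] = G₁[1,(1,0)]⁻¹` and `[T,0]`, hence all of `SL(2,ℤ)`;
conjugating by `[T,0]` gives `[1,(0,-1)]`, and these two translations generate `ℤ²`. The
translation `[1,(1,0)]` is the word `G₁²G₂G₁G₂G₁G₂⁻¹G₁⁻¹`, whose matrix part is trivial because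
`(ST)³ = -1 = T²`.
-/

namespace JacobiGroup

open Matrix.SpecialLinearGroup ModularGroup MatrixGroups

instance : DecidableEq JacobiGroup := fun g h =>
  decidable_of_iff (g.M = h.M ∧ g.v = h.v) (JacobiGroup.ext_iff ..).symm

def ofSL : SL(2, ℤ) →* JacobiGroup where
  toFun M := ⟨M, 0⟩
  map_one' := rfl
  map_mul' M N := by rw [mul_def, rowAct_zero, zero_add]

def translation : Multiplicative (ℤ × ℤ) →* JacobiGroup where
  toFun v := ⟨1, v.toAdd⟩
  map_one' := rfl
  map_mul' v w := by rw [mul_def, rowAct_one, mul_one]; rfl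

lemma translation_ofAdd (v : ℤ × ℤ) : translation (.ofAdd v) = ⟨1, v⟩ := rfl

lemma mk_eq_ofSL_mul_translation (M : SL(2, ℤ)) (v : ℤ × ℤ) :
    (⟨M, v⟩ : JacobiGroup) = ofSL M * translation (.ofAdd v) := by
  rw [translation_ofAdd, mul_def]
  simp [ofSL, rowAct_zero]

lemma ofSL_inv_mul_translation_mul_ofSL (M : SL(2, ℤ)) (v : ℤ × ℤ) :
    (ofSL M)⁻¹ * translation (.ofAdd v) * ofSL M = translation (.ofAdd (rowAct v M)) := by
  ext1 <;> simp [ofSL, translation_ofAdd, mul_def, inv_def, rowAct_zero, rowAct_one]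

lemma ofSL_mem_of_mk_mem {H : Subgroup JacobiGroup} {M : SL(2, ℤ)} {v : ℤ × ℤ}
    (h : ⟨M, v⟩ ∈ H) (hv : translation (.ofAdd v) ∈ H) : ofSL M ∈ H := by
  rw [mk_eq_ofSL_mul_translation] at h
  simpa using mul_mem h (inv_mem hv)

lemma ofSL_range_le {H : Subgroup JacobiGroup} (hS : ofSL S ∈ H) (hT : ofSL T ∈ H) :
    ofSL.range ≤ H := by
  rw [MonoidHom.range_eq_map, ← SpecialLinearGroup.SL2Z_generators, MonoidHom.map_closure,
    Set.image_pair, Subgroup.closure_le, Set.insert_subset_iff, Set.singleton_subset_iff]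
  exact ⟨hS, hT⟩

lemma translation_mem_of_ofSL_range_le {H : Subgroup JacobiGroup} (hSL : ofSL.range ≤ H)
    (h : translation (.ofAdd (1, 0)) ∈ H) (v : ℤ × ℤ) : translation (.ofAdd v) ∈ H := by
  have h' : translation (.ofAdd (0, -1)) ∈ H := by
    have hS : rowAct (1, 0) S = (0, -1) := by simp [rowAct, coe_S]
    rw [← hS, ← ofSL_inv_mul_translation_mul_ofSL]
    exact mul_mem (mul_mem (inv_mem (hSL ⟨S, rfl⟩)) h) (hSL ⟨S, rfl⟩)
  have hv : Multiplicative.ofAdd v =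
      Multiplicative.ofAdd (1, 0) ^ v.1 * Multiplicative.ofAdd (0, -1) ^ (-v.2) := by
    ext <;> simp
  rw [hv, map_mul, map_zpow, map_zpow]
  exact mul_mem (zpow_mem h _) (zpow_mem h' _)

lemma eq_top_of_ofSL_range_le {H : Subgroup JacobiGroup} (hSL : ofSL.range ≤ H)
    (h : translation (.ofAdd (1, 0)) ∈ H) : H = ⊤ := by
  refine (Subgroup.eq_top_iff' H).2 fun ⟨M, v⟩ => ?_
  rw [mk_eq_ofSL_mul_translation]
  exact mul_mem (hSL ⟨M, rfl⟩) (translation_mem_of_ofSL_range_le hSL h v)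

end JacobiGroup

open JacobiGroup

/-- The Jacobi group is generated by `G₁ = [S,(1,0)]` and `G₂ = [T,(1,0)]`. -/
theorem jacobiGroup_generated_by_G1_G2 :
    Subgroup.closure ({G1, G2} : Set JacobiGroup) = ⊤ := by
  set H := Subgroup.closure ({G1, G2} : Set JacobiGroup)
  have hG1 : G1 ∈ H := Subgroup.subset_closure (by simp)
  have hG2 : G2 ∈ H := Subgroup.subset_closure (by simp)
  have he₁ : translation (.ofAdd (1, 0)) ∈ H := by
    have hword : G1 * (G1 * G2 * G1 * G2 * G1 * G2⁻¹) * G1⁻¹ = translation (.ofAdd (1, 0)) := by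
      decide
    rw [← hword]
    apply_rules [mul_mem, inv_mem]
  -- Mathlib's `ModularGroup.S` and `ModularGroup.T` are `matT` and `matS`.
  refine eq_top_of_ofSL_range_le (ofSL_range_le ?_ ?_) he₁
  · exact ofSL_mem_of_mk_mem (M := ModularGroup.S) hG2 he₁
  · exact ofSL_mem_of_mk_mem (M := ModularGroup.T) hG1 he₁
end

section
/- Under the stated hypotheses on f, the period function P satisfies the three-term period relation: for all τ ∈ ℍ and z ∈ ℂ, P(τ,z) + τ^{−k} e^{−2πimz²/τ} P((τ−1)/τ, z/τ) + (τ−1)^{−k} e^{−2πimz²/(τ−1)} P(−1/(τ−1), z/(τ−1)) = 0. -/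
/-!
Let `F|γ` be the slash action of `SL(2, ℤ)` in weight `k` and index `m` on functions on
`ℍ × ℂ`; it is a right action, `F|(γδ) = (F|γ)|δ`. Periodicity of `f` in `τ` says `f|T = f`, and
evenness of `k` and of `f` in `z` say `f|(-1) = f`. With `P = f|S - f` and `U = TS`, the three
terms of the relation are `P`, `P|U` and `P|U²`. Since `U² = T·(SU)` and `T·(SU²) = U³ = -1`,
invariance under `T` and `-1` gives `f|U = f|S`, `f|(SU) = f|U²` and `f|(SU²) = f`, so the sum
telescopes: `(f|S - f) + (f|U² - f|S) + (f - f|U²) = 0`.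
-/

open Complex
open UpperHalfPlane hiding I
open ModularGroup
open scoped MatrixGroups

namespace ModularGroup

lemma denom_apply_complex (γ : SL(2, ℤ)) (τ : ℂ) : denom γ τ = γ 1 0 * τ + γ 1 1 := by
  simp [denom]

lemma coe_smul_apply (γ : SL(2, ℤ)) (τ : ℍ) :
    (↑(γ • τ) : ℂ) = (γ 0 0 * τ + γ 0 1) / denom γ τ := by
  rw [coe_specialLinearGroup_apply, denom_apply_complex]
  simp

lemma denom_mul_denom_smul (γ δ : SL(2, ℤ)) (τ : ℍ) :
    denom γ ↑(δ • τ) * denom δ τ = γ 1 0 * (δ 0 0 * τ + δ 0 1) + γ 1 1 * denom δ τ := by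
  rw [coe_smul_apply, denom_apply_complex γ]
  field_simp [denom_ne_zero δ τ]

lemma denom_mul (γ δ : SL(2, ℤ)) (τ : ℍ) :
    denom ↑(γ * δ) τ = denom γ ↑(δ • τ) * denom δ τ := by
  rw [denom_mul_denom_smul]
  simp only [denom_apply_complex, Matrix.SpecialLinearGroup.coe_mul, Matrix.mul_apply,
    Fin.sum_univ_two]
  push_cast
  ring

lemma lowerLeft_div_denom_mul (γ δ : SL(2, ℤ)) (τ : ℍ) :
    ((γ * δ) 1 0 : ℂ) / denom ↑(γ * δ) τ =
      δ 1 0 / denom δ τ + γ 1 0 / (denom δ τ ^ 2 * denom γ ↑(δ • τ)) := by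
  have hdet : (δ 0 0 * δ 1 1 - δ 0 1 * δ 1 0 : ℂ) = 1 := by
    exact_mod_cast (Matrix.det_fin_two _).symm.trans δ.det_coe
  rw [denom_mul]
  field_simp [denom_ne_zero δ τ, denom_ne_zero γ (δ • τ)]
  rw [denom_mul_denom_smul, denom_apply_complex δ]
  simp only [Matrix.SpecialLinearGroup.coe_mul, Matrix.mul_apply, Fin.sum_univ_two]
  push_cast
  linear_combination (γ 1 0 : ℂ) * hdet

lemma coe_T_mul_S : ↑(T * S) = !![1, -1; 1, 0] := by
  simp

lemma coe_T_mul_S_mul_T_mul_S : ↑(T * S * (T * S)) = !![0, -1; 1, -1] := by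
  simp

end ModularGroup

noncomputable def jacobiSlash (k : ℤ) (m : ℝ) (γ : SL(2, ℤ)) (F : ℍ → ℂ → ℂ) (τ : ℍ) (z : ℂ) :
    ℂ :=
  denom γ τ ^ (-k) * cexp (-2 * Real.pi * I * m * γ 1 0 * z ^ 2 / denom γ τ) *
    F (γ • τ) (z / denom γ τ)

section JacobiSlash

variable {k : ℤ} {m : ℝ}

lemma jacobiSlash_mul (γ δ : SL(2, ℤ)) (F : ℍ → ℂ → ℂ) :
    jacobiSlash k m (γ * δ) F = jacobiSlash k m δ (jacobiSlash k m γ F) := by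
  ext τ z
  have hexp : -2 * Real.pi * I * m * (γ * δ) 1 0 * z ^ 2 / denom ↑(γ * δ) τ =
      -2 * Real.pi * I * m * δ 1 0 * z ^ 2 / denom δ τ +
        -2 * Real.pi * I * m * γ 1 0 * (z / denom δ τ) ^ 2 / denom γ ↑(δ • τ) := by
    calc _ = -2 * Real.pi * I * m * z ^ 2 * (((γ * δ) 1 0 : ℂ) / denom ↑(γ * δ) τ) := by ring
      _ = _ := by rw [lowerLeft_div_denom_mul]; ring
  simp only [jacobiSlash]
  rw [hexp, exp_add, denom_mul, mul_zpow, mul_smul, div_mul_eq_div_div_swap]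
  ring

lemma jacobiSlash_sub (γ : SL(2, ℤ)) (F G : ℍ → ℂ → ℂ) :
    jacobiSlash k m γ (F - G) = jacobiSlash k m γ F - jacobiSlash k m γ G := by
  ext τ z
  simp only [jacobiSlash, Pi.sub_apply]
  ring

lemma jacobiSlash_T (F : ℍ → ℂ → ℂ) (τ : ℍ) (z : ℂ) :
    jacobiSlash k m T F τ z = F ((1 : ℝ) +ᵥ τ) z := by
  simp only [jacobiSlash, denom_apply_complex, modular_T_smul]
  simp

lemma jacobiSlash_neg_one (hk : Even k) (F : ℍ → ℂ → ℂ) (τ : ℍ) (z : ℂ) :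
    jacobiSlash k m (-1) F τ z = F τ (-z) := by
  simp only [jacobiSlash, denom_apply_complex, SL_neg_smul, one_smul]
  simp [hk.neg.neg_one_zpow, div_neg]

lemma jacobiSlash_apply_of_lowerLeft_eq_one {γ : SL(2, ℤ)} (hγ : γ 1 0 = 1)
    (F : ℍ → ℂ → ℂ) (τ : ℍ) (z : ℂ) :
    jacobiSlash k m γ F τ z = (τ + γ 1 1) ^ (-k) *
      cexp (-2 * Real.pi * I * m * z ^ 2 / (τ + γ 1 1)) * F (γ • τ) (z / (τ + γ 1 1)) := by
  simp only [jacobiSlash, denom_apply_complex, hγ, Int.cast_one, one_mul, mul_one]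

lemma jacobiSlash_S_apply (f : ℂ → ℂ → ℂ) (τ : ℍ) (z : ℂ) :
    jacobiSlash k m S (fun τ : ℍ => f τ) τ z =
      (τ : ℂ) ^ (-k) * cexp (-2 * Real.pi * I * m * z ^ 2 / τ) * f (-1 / τ) (z / τ) := by
  rw [jacobiSlash_apply_of_lowerLeft_eq_one (by decide), coe_smul_apply, denom_apply_complex]
  simp

lemma jacobiSlash_T_mul_S_apply (f : ℂ → ℂ → ℂ) (τ : ℍ) (z : ℂ) :
    jacobiSlash k m (T * S) (fun τ : ℍ => f τ) τ z =
      (τ : ℂ) ^ (-k) * cexp (-2 * Real.pi * I * m * z ^ 2 / τ) * f ((τ - 1) / τ) (z / τ) := by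
  rw [jacobiSlash_apply_of_lowerLeft_eq_one (by decide), coe_smul_apply, denom_apply_complex,
    coe_T_mul_S]
  simp [sub_eq_add_neg]

lemma jacobiSlash_T_mul_S_mul_T_mul_S_apply (f : ℂ → ℂ → ℂ) (τ : ℍ) (z : ℂ) :
    jacobiSlash k m (T * S * (T * S)) (fun τ : ℍ => f τ) τ z =
      ((τ : ℂ) - 1) ^ (-k) * cexp (-2 * Real.pi * I * m * z ^ 2 / (τ - 1)) *
        f (-1 / (τ - 1)) (z / (τ - 1)) := by
  rw [jacobiSlash_apply_of_lowerLeft_eq_one (by decide), coe_smul_apply, denom_apply_complex,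
    coe_T_mul_S_mul_T_mul_S]
  simp [sub_eq_add_neg]

variable {F P : ℍ → ℂ → ℂ}

lemma jacobiSlash_T_mul (hT : jacobiSlash k m T F = F) (γ : SL(2, ℤ)) :
    jacobiSlash k m (T * γ) F = jacobiSlash k m γ F := by
  rw [jacobiSlash_mul, hT]

theorem jacobiSlash_period_three_term (hT : jacobiSlash k m T F = F)
    (hneg : jacobiSlash k m (-1) F = F) (hP : P = jacobiSlash k m S F - F) :
    P + jacobiSlash k m (T * S) P + jacobiSlash k m (T * S * (T * S)) P = 0 := by
  have hU : jacobiSlash k m (T * S) F = jacobiSlash k m S F := jacobiSlash_T_mul hT S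
  have hSU : jacobiSlash k m (S * (T * S)) F = jacobiSlash k m (T * S * (T * S)) F := by
    rw [← jacobiSlash_T_mul hT, ← mul_assoc, mul_assoc T S]
  have hSUU : jacobiSlash k m (S * (T * S * (T * S))) F = F := by
    rw [← jacobiSlash_T_mul hT, show T * (S * (T * S * (T * S))) = -1 by decide, hneg]
  simp only [hP, jacobiSlash_sub, ← jacobiSlash_mul, hU, hSU, hSUU]
  abel

end JacobiSlash

theorem period_three_term_relation_general
    (k : ℤ) (hk : Even k) (m : ℝ) (f P : ℂ → ℂ → ℂ)
    (hper1 : ∀ τ z : ℂ, 0 < τ.im → f (τ + 1) z = f τ z)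
    (heven : ∀ τ z : ℂ, 0 < τ.im → f τ (-z) = f τ z)
    (hP : ∀ τ z : ℂ, 0 < τ.im →
      P τ z = τ ^ (-k) * Complex.exp (-2 * (Real.pi : ℂ) * I * (m : ℂ) * z ^ 2 / τ) *
          f (-1 / τ) (z / τ) - f τ z) :
    ∀ τ z : ℂ, 0 < τ.im →
      P τ z +
          τ ^ (-k) * Complex.exp (-2 * (Real.pi : ℂ) * I * (m : ℂ) * z ^ 2 / τ) *
            P ((τ - 1) / τ) (z / τ) +
          (τ - 1) ^ (-k) *
            Complex.exp (-2 * (Real.pi : ℂ) * I * (m : ℂ) * z ^ 2 / (τ - 1)) *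
            P (-1 / (τ - 1)) (z / (τ - 1)) = 0 := by
  intro τ z hτ
  set F : ℍ → ℂ → ℂ := fun τ => f τ
  have hT : jacobiSlash k m T F = F := by
    ext τ z
    rw [jacobiSlash_T]
    simpa [F, add_comm] using hper1 τ z τ.im_pos
  have hneg : jacobiSlash k m (-1) F = F := by
    ext τ z
    exact (jacobiSlash_neg_one hk F τ z).trans (heven τ z τ.im_pos)
  have hPF : (fun τ : ℍ => P τ) = jacobiSlash k m S F - F := by
    ext τ z
    simp only [Pi.sub_apply]
    rw [jacobiSlash_S_apply, hP τ z τ.im_pos]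
  have key := congr_fun (congr_fun (jacobiSlash_period_three_term hT hneg hPF) ⟨τ, hτ⟩) z
  simp only [Pi.add_apply, Pi.zero_apply] at key
  rwa [jacobiSlash_T_mul_S_apply, jacobiSlash_T_mul_S_mul_T_mul_S_apply] at key

/-- Three-term period relation. -/
theorem period_three_term_relation
    (k : ℤ) (hk : Even k) (m : ℝ) (f P h : ℂ → ℂ → ℂ)
    (hper1 : ∀ τ z : ℂ, 0 < τ.im → f (τ + 1) z = f τ z)
    (hper2 : ∀ τ z : ℂ, 0 < τ.im → f τ (z + 1) = f τ z)
    (heven : ∀ τ z : ℂ, 0 < τ.im → f τ (-z) = f τ z)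
    (hP : ∀ τ z : ℂ, 0 < τ.im →
      P τ z = τ ^ (-k) * Complex.exp (-2 * (Real.pi : ℂ) * I * (m : ℂ) * z ^ 2 / τ) *
          f (-1 / τ) (z / τ) - f τ z)
    (hh : ∀ τ z : ℂ, 0 < τ.im →
      h τ z = Complex.exp (2 * (Real.pi : ℂ) * I * (m : ℂ) * (τ + 2 * z)) * f τ (z + τ)
          - f τ z) :
    ∀ τ z : ℂ, 0 < τ.im →
      P τ z +
          τ ^ (-k) * Complex.exp (-2 * (Real.pi : ℂ) * I * (m : ℂ) * z ^ 2 / τ) *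
            P ((τ - 1) / τ) (z / τ) +
          (τ - 1) ^ (-k) *
            Complex.exp (-2 * (Real.pi : ℂ) * I * (m : ℂ) * z ^ 2 / (τ - 1)) *
            P (-1 / (τ - 1)) (z / (τ - 1)) = 0 :=
  period_three_term_relation_general k hk m f P hper1 heven hP
end

section
/- Under the stated hypotheses on f, the period functions satisfy: for all τ ∈ ℍ and z ∈ ℂ, τ^{−k} e^{−2πimz²/τ} h(−1/τ, z/τ) = −P(τ,z) + P(τ, z−1). -/
open Complex

/-! The factor `e^{2πim(-1/τ + 2z/τ)}` of `h(-1/τ, z/τ)` merges with the slash factor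
`e^{-2πimz²/τ}` into `e^{-2πim(z-1)²/τ}`, and `z/τ + (-1/τ) = (z-1)/τ`; so the two terms of the
slashed `h` are `P(τ, z-1) + f(τ, z-1)` and `-(P(τ, z) + f(τ, z))`, and periodicity of `f` in `z`
cancels the `f`-terms. -/

lemma im_neg_one_div_pos {τ : ℂ} (hτ : 0 < τ.im) : 0 < (-1 / τ).im := by
  rw [neg_div, one_div, neg_inv]
  exact UpperHalfPlane.im_inv_neg_coe_pos ⟨τ, hτ⟩

lemma add_neg_one_div (z τ : ℂ) : z / τ + -1 / τ = (z - 1) / τ := by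
  ring

lemma exp_neg_sq_div_mul_exp_eq_exp_neg_sub_one_sq_div (c z τ : ℂ) (hτ : τ ≠ 0) :
    exp (-c * z ^ 2 / τ) * exp (c * (-1 / τ + 2 * (z / τ))) = exp (-c * (z - 1) ^ 2 / τ) := by
  rw [← exp_add]
  congr 1
  field_simp
  ring

theorem period_h_slash_T_general
    (k : ℤ) (m : ℝ) (f P h : ℂ → ℂ → ℂ)
    (hper2 : ∀ τ z : ℂ, 0 < τ.im → f τ (z + 1) = f τ z)
    (hP : ∀ τ z : ℂ, 0 < τ.im →
      P τ z = τ ^ (-k) * Complex.exp (-2 * (Real.pi : ℂ) * I * (m : ℂ) * z ^ 2 / τ) *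
          f (-1 / τ) (z / τ) - f τ z)
    (hh : ∀ τ z : ℂ, 0 < τ.im →
      h τ z = Complex.exp (2 * (Real.pi : ℂ) * I * (m : ℂ) * (τ + 2 * z)) * f τ (z + τ)
          - f τ z) :
    ∀ τ z : ℂ, 0 < τ.im →
      τ ^ (-k) * Complex.exp (-2 * (Real.pi : ℂ) * I * (m : ℂ) * z ^ 2 / τ) *
          h (-1 / τ) (z / τ) =
        -P τ z + P τ (z - 1) := by
  intro τ z hτ
  have hτ0 : τ ≠ 0 := fun h0 => by simp [h0] at hτ
  have hf : f τ (z - 1) = f τ z := by simpa using (hper2 τ (z - 1) hτ).symm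
  have hexp := exp_neg_sq_div_mul_exp_eq_exp_neg_sub_one_sq_div (2 * Real.pi * I * m) z τ hτ0
  rw [hh _ _ (im_neg_one_div_pos hτ), hP _ _ hτ, hP _ _ hτ, add_neg_one_div, hf]
  simp only [neg_mul] at hexp ⊢
  linear_combination (τ ^ (-k) * f (-1 / τ) ((z - 1) / τ)) * hexp

/-- `τ^{−k} e^{−2πimz²/τ} h(−1/τ, z/τ) = −P(τ,z) + P(τ, z−1)`. -/
theorem period_h_slash_T
    (k : ℤ) (hk : Even k) (m : ℝ) (f P h : ℂ → ℂ → ℂ)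
    (hper1 : ∀ τ z : ℂ, 0 < τ.im → f (τ + 1) z = f τ z)
    (hper2 : ∀ τ z : ℂ, 0 < τ.im → f τ (z + 1) = f τ z)
    (heven : ∀ τ z : ℂ, 0 < τ.im → f τ (-z) = f τ z)
    (hP : ∀ τ z : ℂ, 0 < τ.im →
      P τ z = τ ^ (-k) * Complex.exp (-2 * (Real.pi : ℂ) * I * (m : ℂ) * z ^ 2 / τ) *
          f (-1 / τ) (z / τ) - f τ z)
    (hh : ∀ τ z : ℂ, 0 < τ.im →
      h τ z = Complex.exp (2 * (Real.pi : ℂ) * I * (m : ℂ) * (τ + 2 * z)) * f τ (z + τ)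
          - f τ z) :
    ∀ τ z : ℂ, 0 < τ.im →
      τ ^ (-k) * Complex.exp (-2 * (Real.pi : ℂ) * I * (m : ℂ) * z ^ 2 / τ) *
          h (-1 / τ) (z / τ) =
        -P τ z + P τ (z - 1) :=
  period_h_slash_T_general k m f P h hper2 hP hh
end

section
/- Under the stated hypotheses on f, the period functions satisfy: for all τ ∈ ℍ and z ∈ ℂ, h(τ,z) = P(τ,z) − e^{2πim(τ+2z)} P(τ, −z−τ). -/
open Complex

/-! The `z ↦ z + τ` period of a Jacobi integral is expressed through its `S`-period because
`(z + τ)² / τ = z² / τ + τ + 2z`: the `S`-automorphy factor at `-z - τ`, multiplied by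
`e^{2πim(τ+2z)}`, is the `S`-automorphy factor at `z`, while evenness and `1`-periodicity in `z`
identify `f(-1/τ, (-z-τ)/τ) = f(-1/τ, -(z/τ + 1))` with `f(-1/τ, z/τ)`. -/

lemma exp_mul_add_two_mul_mul_exp_neg_mul_add_sq_div {τ : ℂ} (hτ : τ ≠ 0) (c z : ℂ) :
    exp (c * (τ + 2 * z)) * exp (-c * (z + τ) ^ 2 / τ) = exp (-c * z ^ 2 / τ) := by
  rw [← exp_add]
  congr 1
  field_simp
  ring

theorem period_h_eq_P_minus_general
    (k : ℤ) (m : ℝ) (f P h : ℂ → ℂ → ℂ)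
    (hper2 : ∀ τ z : ℂ, 0 < τ.im → f τ (z + 1) = f τ z)
    (heven : ∀ τ z : ℂ, 0 < τ.im → f τ (-z) = f τ z)
    (hP : ∀ τ z : ℂ, 0 < τ.im →
      P τ z = τ ^ (-k) * Complex.exp (-2 * (Real.pi : ℂ) * I * (m : ℂ) * z ^ 2 / τ) *
          f (-1 / τ) (z / τ) - f τ z)
    (hh : ∀ τ z : ℂ, 0 < τ.im →
      h τ z = Complex.exp (2 * (Real.pi : ℂ) * I * (m : ℂ) * (τ + 2 * z)) * f τ (z + τ)
          - f τ z) :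
    ∀ τ z : ℂ, 0 < τ.im →
      h τ z =
        P τ z - Complex.exp (2 * (Real.pi : ℂ) * I * (m : ℂ) * (τ + 2 * z)) *
          P τ (-z - τ) := by
  intro τ z hτ
  have hτ0 : τ ≠ 0 := UpperHalfPlane.ne_zero ⟨τ, hτ⟩
  have hSτ : 0 < (-1 / τ).im := by
    simpa [neg_div, ← inv_neg] using UpperHalfPlane.im_inv_neg_coe_pos ⟨τ, hτ⟩
  have hf_shift : f τ (-z - τ) = f τ (z + τ) := by
    rw [← heven τ _ hτ, neg_sub_left, neg_neg, add_comm]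
  have hf_S : f (-1 / τ) ((-z - τ) / τ) = f (-1 / τ) (z / τ) := by
    rw [show (-z - τ) / τ = -(z / τ + 1) by field_simp; ring, heven _ _ hSτ, hper2 _ _ hSτ]
  have hfactor : exp (2 * (Real.pi : ℂ) * I * m * (τ + 2 * z)) *
      exp (-2 * (Real.pi : ℂ) * I * m * (-z - τ) ^ 2 / τ) =
      exp (-2 * (Real.pi : ℂ) * I * m * z ^ 2 / τ) := by
    convert exp_mul_add_two_mul_mul_exp_neg_mul_add_sq_div hτ0 (2 * Real.pi * I * m) z
      using 3 <;> ring
  rw [hh τ z hτ, hP τ z hτ, hP τ (-z - τ) hτ, hf_shift, hf_S]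
  linear_combination (τ ^ (-k) * f (-1 / τ) (z / τ)) * hfactor

/-- `h(τ,z) = P(τ,z) − e^{2πim(τ+2z)} P(τ, −z−τ)`. -/
theorem period_h_eq_P_minus
    (k : ℤ) (hk : Even k) (m : ℝ) (f P h : ℂ → ℂ → ℂ)
    (hper1 : ∀ τ z : ℂ, 0 < τ.im → f (τ + 1) z = f τ z)
    (hper2 : ∀ τ z : ℂ, 0 < τ.im → f τ (z + 1) = f τ z)
    (heven : ∀ τ z : ℂ, 0 < τ.im → f τ (-z) = f τ z)
    (hP : ∀ τ z : ℂ, 0 < τ.im →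
      P τ z = τ ^ (-k) * Complex.exp (-2 * (Real.pi : ℂ) * I * (m : ℂ) * z ^ 2 / τ) *
          f (-1 / τ) (z / τ) - f τ z)
    (hh : ∀ τ z : ℂ, 0 < τ.im →
      h τ z = Complex.exp (2 * (Real.pi : ℂ) * I * (m : ℂ) * (τ + 2 * z)) * f τ (z + τ)
          - f τ z) :
    ∀ τ z : ℂ, 0 < τ.im →
      h τ z =
        P τ z - Complex.exp (2 * (Real.pi : ℂ) * I * (m : ℂ) * (τ + 2 * z)) *
          P τ (-z - τ) :=
  period_h_eq_P_minus_general k m f P h hper2 heven hP hh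
end

section
/- Let m > 0 and k > 4 be real numbers, let τ ∈ ℍ with v = Im τ, and let z ∈ ℂ. Then the family indexed by pairs of coprime integers (c,d) together with λ ∈ ℤ, with term |λ| · |cτ+d|^{−k} · exp( −2πm·(v/|cτ+d|²)·(λ + Im(z·(c·conj(τ)+d))/v)² ), is summable (i.e., the series Σ_{(c,d) coprime} Σ_{λ∈ℤ} of these nonnegative terms converges). -/
open Complex

/-!
Fix a coprime pair `(c, d)` and put `Q = ‖cτ + d‖`, `μ = Im (z (c τ̄ + d)) / v`, so that
`|μ| ≤ (‖z‖ / v) Q`. From `y² ≥ Q |y| - Q²` with `y = λ + μ`, the Gaussian factor is bounded by a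
constant independent of `(c, d)` times `exp (-(2πmv / Q) |λ|)`, and `∑_{λ ∈ ℤ} |λ| e^{-a|λ|} ≤ 2 / a²`.
Hence the inner sum over `λ` is `O(Q^{2-k})`, and `∑ ‖cτ + d‖^{-(k-2)}` converges because `k - 2 > 2`.
-/

lemma mul_abs_sub_le_sq_add {Q K t μ : ℝ} (hQ : 0 ≤ Q) (hμ : |μ| ≤ K * Q) :
    Q * |t| - (K + 1) * Q ^ 2 ≤ (t + μ) ^ 2 := by
  have htμ : |t| - |μ| ≤ |t + μ| := by
    simpa using abs_sub_abs_le_abs_sub t (-μ)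
  nlinarith [sq_abs (t + μ), sq_nonneg (|t + μ| - Q), abs_nonneg μ]

lemma exp_neg_mul_add_sq_le {b Q K t μ : ℝ} (hb : 0 ≤ b) (hQ : 0 < Q) (hμ : |μ| ≤ K * Q) :
    Real.exp (-(b / Q ^ 2) * (t + μ) ^ 2) ≤
      Real.exp (b * (K + 1)) * Real.exp (-(b / Q) * |t|) := by
  rw [← Real.exp_add, Real.exp_le_exp]
  have h := mul_le_mul_of_nonneg_left (mul_abs_sub_le_sq_add (t := t) hQ.le hμ)
    (div_nonneg hb (sq_nonneg Q))
  have e : b / Q ^ 2 * (Q * |t| - (K + 1) * Q ^ 2) = b / Q * |t| - b * (K + 1) := by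
    field_simp
  linarith

lemma hasSum_int_abs_mul_pow_natAbs {r : ℝ} (hr : |r| < 1) :
    HasSum (fun n : ℤ => |(n : ℝ)| * r ^ n.natAbs) (2 * r / (1 - r) ^ 2) := by
  have h : HasSum (fun n : ℕ => (n : ℝ) * r ^ n) (r / (1 - r) ^ 2) :=
    hasSum_coe_mul_geometric_of_norm_lt_one hr
  have hnat : HasSum (fun n : ℕ => |((n : ℤ) : ℝ)| * r ^ (n : ℤ).natAbs) (r / (1 - r) ^ 2) := by
    simpa only [Int.cast_natCast, Nat.abs_cast, Int.natAbs_natCast] using h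
  have hneg : HasSum (fun n : ℕ => |((-n : ℤ) : ℝ)| * r ^ (-n : ℤ).natAbs) (r / (1 - r) ^ 2) := by
    simpa only [Int.cast_neg, Int.cast_natCast, abs_neg, Nat.abs_cast, Int.natAbs_neg,
      Int.natAbs_natCast] using h
  rw [show 2 * r / (1 - r) ^ 2 =
      r / (1 - r) ^ 2 + r / (1 - r) ^ 2 - |((0 : ℤ) : ℝ)| * r ^ (0 : ℤ).natAbs by simp; ring]
  exact hnat.of_nat_of_neg hneg

lemma hasSum_int_abs_mul_exp_neg_mul_abs {a : ℝ} (ha : 0 < a) :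
    HasSum (fun n : ℤ => |(n : ℝ)| * Real.exp (-a * |(n : ℝ)|))
      (2 * Real.exp (-a) / (1 - Real.exp (-a)) ^ 2) := by
  have hr : |Real.exp (-a)| < 1 := by
    rw [abs_of_pos (Real.exp_pos _), Real.exp_lt_one_iff]; linarith
  convert hasSum_int_abs_mul_pow_natAbs hr using 2 with n
  rw [← Real.exp_nat_mul, Nat.cast_natAbs, Int.cast_abs]
  ring_nf

lemma two_mul_exp_neg_div_one_sub_exp_neg_sq_le {a : ℝ} (ha : 0 < a) :
    2 * Real.exp (-a) / (1 - Real.exp (-a)) ^ 2 ≤ 2 / a ^ 2 := by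
  set e := Real.exp (-(a / 2)) with he
  have he_sq : Real.exp (-a) = e ^ 2 := by rw [he, ← Real.exp_nat_mul]; ring_nf
  -- `1 - e⁻ᵃ = 2 e^{-a/2} sinh (a/2) ≥ a e^{-a/2}`
  have key : a * e ≤ 1 - e ^ 2 := by
    have hs : a / 2 ≤ Real.sinh (a / 2) := Real.self_le_sinh_iff.2 (by positivity)
    have he_inv : Real.exp (a / 2) * e = 1 := by rw [he, ← Real.exp_add]; simp
    rw [Real.sinh_eq] at hs
    nlinarith [Real.exp_pos (-(a / 2))]
  have hae : 0 < a * e := by positivity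
  rw [he_sq, div_le_div_iff₀ (by nlinarith) (by positivity)]
  nlinarith [pow_le_pow_left₀ hae.le key 2]

lemma tsum_int_abs_mul_exp_neg_mul_abs_le {a : ℝ} (ha : 0 < a) :
    ∑' n : ℤ, |(n : ℝ)| * Real.exp (-a * |(n : ℝ)|) ≤ 2 / a ^ 2 :=
  (hasSum_int_abs_mul_exp_neg_mul_abs ha).tsum_eq ▸ two_mul_exp_neg_div_one_sub_exp_neg_sq_le ha

section ShiftedGaussian

variable {b Q K μ : ℝ}

lemma abs_mul_exp_neg_mul_add_sq_le (hb : 0 ≤ b) (hQ : 0 < Q) (hμ : |μ| ≤ K * Q) (t : ℝ) :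
    |t| * Real.exp (-(b / Q ^ 2) * (t + μ) ^ 2) ≤
      Real.exp (b * (K + 1)) * (|t| * Real.exp (-(b / Q) * |t|)) := by
  rw [mul_left_comm]
  exact mul_le_mul_of_nonneg_left (exp_neg_mul_add_sq_le hb hQ hμ) (abs_nonneg t)

lemma summable_abs_mul_exp_neg_mul_add_sq (hb : 0 < b) (hQ : 0 < Q) (hμ : |μ| ≤ K * Q) :
    Summable (fun n : ℤ => |(n : ℝ)| * Real.exp (-(b / Q ^ 2) * (n + μ) ^ 2)) :=
  .of_nonneg_of_le (fun _ => by positivity) (fun n => abs_mul_exp_neg_mul_add_sq_le hb.le hQ hμ n)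
    ((hasSum_int_abs_mul_exp_neg_mul_abs (div_pos hb hQ)).summable.mul_left _)

lemma tsum_abs_mul_exp_neg_mul_add_sq_le (hb : 0 < b) (hQ : 0 < Q) (hμ : |μ| ≤ K * Q) :
    ∑' n : ℤ, |(n : ℝ)| * Real.exp (-(b / Q ^ 2) * (n + μ) ^ 2) ≤
      2 * Real.exp (b * (K + 1)) / b ^ 2 * Q ^ 2 := by
  have hsum := (hasSum_int_abs_mul_exp_neg_mul_abs (div_pos hb hQ)).summable
  calc ∑' n : ℤ, |(n : ℝ)| * Real.exp (-(b / Q ^ 2) * (n + μ) ^ 2)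
      ≤ ∑' n : ℤ, Real.exp (b * (K + 1)) * (|(n : ℝ)| * Real.exp (-(b / Q) * |(n : ℝ)|)) :=
        (summable_abs_mul_exp_neg_mul_add_sq hb hQ hμ).tsum_le_tsum
          (fun n => abs_mul_exp_neg_mul_add_sq_le hb.le hQ hμ n) (hsum.mul_left _)
    _ ≤ Real.exp (b * (K + 1)) * (2 / (b / Q) ^ 2) := by
        rw [tsum_mul_left]
        gcongr
        exact tsum_int_abs_mul_exp_neg_mul_abs_le (div_pos hb hQ)
    _ = 2 * Real.exp (b * (K + 1)) / b ^ 2 * Q ^ 2 := by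
        field_simp

end ShiftedGaussian

lemma intCast_mul_add_ne_zero {τ : ℂ} (hτ : τ.im ≠ 0) {c d : ℤ} (hcd : (c, d) ≠ 0) :
    (c : ℂ) * τ + d ≠ 0 := by
  intro h
  have hc : c = 0 := by
    simpa [hτ] using congrArg Complex.im h
  have hd : d = 0 := by
    simpa [hc] using h
  exact hcd (by simp [hc, hd])

lemma summable_norm_intCast_mul_add_rpow_neg {τ : ℂ} (hτ : 0 < τ.im) {s : ℝ} (hs : 2 < s) :
    Summable (fun p : ℤ × ℤ => ‖(p.1 : ℂ) * τ + p.2‖ ^ (-s)) := by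
  rw [← (finTwoArrowEquiv ℤ).summable_iff]
  exact .of_nonneg_of_le (fun _ => Real.rpow_nonneg (norm_nonneg _) _)
    (fun x => EisensteinSeries.summand_bound ⟨τ, hτ⟩ (by linarith) x)
    ((EisensteinSeries.summable_one_div_norm_rpow hs).mul_left _)

lemma abs_im_mul_intCast_mul_conj_add_div_le (z τ : ℂ) (c d : ℤ) {v : ℝ} (hv : 0 < v) :
    |(z * ((c : ℂ) * (starRingEnd ℂ) τ + d)).im / v| ≤ ‖z‖ / v * ‖(c : ℂ) * τ + d‖ := by
  rw [abs_div, abs_of_pos hv, div_mul_eq_mul_div]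
  gcongr
  calc _ ≤ ‖z * ((c : ℂ) * (starRingEnd ℂ) τ + d)‖ := abs_im_le_norm _
    _ = ‖z‖ * ‖(c : ℂ) * τ + d‖ := by
      rw [norm_mul, ← norm_conj ((c : ℂ) * τ + d)]
      simp

/-- Absolute convergence for `k > 4`: the family over coprime pairs `(c,d)` and `λ ∈ ℤ`
with term `|λ| |cτ+d|^{−k} exp(−2πm (v/|cτ+d|²)(λ + Im(z(c conj τ + d))/v)²)`
is summable. -/
theorem jacobi_eisenstein_summable_with_lambda (m k : ℝ) (hm : 0 < m) (hk : 4 < k)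
    (τ : ℂ) (hτ : 0 < τ.im) (z : ℂ) :
    Summable (fun p : {p : ℤ × ℤ // Int.gcd p.1 p.2 = 1} × ℤ =>
      |(p.2 : ℝ)| *
        ‖((p.1 : ℤ × ℤ).1 : ℂ) * τ + ((p.1 : ℤ × ℤ).2 : ℂ)‖ ^ (-k) *
        Real.exp (-2 * Real.pi * m *
          (τ.im / ‖((p.1 : ℤ × ℤ).1 : ℂ) * τ + ((p.1 : ℤ × ℤ).2 : ℂ)‖ ^ 2) *
          ((p.2 : ℝ) +
            (z * (((p.1 : ℤ × ℤ).1 : ℂ) * (starRingEnd ℂ) τ + ((p.1 : ℤ × ℤ).2 : ℂ))).im /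
              τ.im) ^ 2)) := by
  set b := 2 * Real.pi * m * τ.im
  have hb : 0 < b := by positivity
  have hQ (p : {p : ℤ × ℤ // Int.gcd p.1 p.2 = 1}) : 0 < ‖(p.1.1 : ℂ) * τ + p.1.2‖ :=
    norm_pos_iff.2 <| intCast_mul_add_ne_zero hτ.ne' fun h => by
      obtain ⟨hc, hd⟩ := Prod.mk_eq_zero.1 h
      simpa [hc, hd] using p.2
  have hμ (p : {p : ℤ × ℤ // Int.gcd p.1 p.2 = 1}) :=
    abs_im_mul_intCast_mul_conj_add_div_le z τ p.1.1 p.1.2 hτ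
  have hsplit (Q y : ℝ) (n : ℤ) :
      |(n : ℝ)| * Q ^ (-k) * Real.exp (-2 * Real.pi * m * (τ.im / Q ^ 2) * y) =
        Q ^ (-k) * (|(n : ℝ)| * Real.exp (-(b / Q ^ 2) * y)) := by
    rw [mul_comm |(n : ℝ)|, mul_assoc]
    congr 3
    ring
  refine (summable_prod_of_nonneg fun p => by positivity).2 ⟨fun p => ?_, ?_⟩
  · simp only [hsplit]
    exact (summable_abs_mul_exp_neg_mul_add_sq hb (hQ p) (hμ p)).mul_left _
  · refine .of_nonneg_of_le (fun p => tsum_nonneg fun n => by positivity) (fun p => ?_)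
      (((summable_norm_intCast_mul_add_rpow_neg hτ (s := k - 2) (by linarith)).subtype _).mul_left
        (2 * Real.exp (b * (‖z‖ / τ.im + 1)) / b ^ 2))
    simp only [hsplit, tsum_mul_left, Function.comp_apply]
    grw [tsum_abs_mul_exp_neg_mul_add_sq_le hb (hQ p) (hμ p)]
    rw [neg_sub, sub_eq_neg_add, Real.rpow_add (hQ p), Real.rpow_two]
    exact le_of_eq (by ring)
end
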